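/- Let u ∈ k^* and let α ∈ Aff_3(k) \ B have type (γ1,γ2,γ3). If (γ1,γ2,γ3) = (3,2,1), then the lift α̂ of α satisfies condition (C). -/

import Mathlib

open MvPolynomial

noncomputable section

namespace YasudaPaper

variable {k : Type*} [Field k]

/-- `f := x1*x3 - x2^2` (variables: `X 0 = x1, X 1 = x2, X 2 = x3`). -/
def fP : MvPolynomial (Fin 3) k := X 0 * X 2 - X 1 ^ 2

/-- `r := x2*f + x1^2`. -/
def rP : MvPolynomial (Fin 3) k := X 1 * fP + X 0 ^ 2

/-- `g := x3*f^2 + 2*x1*x2*f + x1^3`. -/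
def gP : MvPolynomial (Fin 3) k := X 2 * fP ^ 2 + 2 * X 0 * X 1 * fP + X 0 ^ 3

/-- The Jacobian derivation `Δ = Δ_{(f,g)}`, `h ↦ det ∂(f,g,h)/∂(x1,x2,x3)`. -/
def Del (h : MvPolynomial (Fin 3) k) : MvPolynomial (Fin 3) k :=
  Matrix.det !![pderiv 0 fP, pderiv 1 fP, pderiv 2 fP;
                pderiv 0 gP, pderiv 1 gP, pderiv 2 gP;
                pderiv 0 h,  pderiv 1 h,  pderiv 2 h]

/-- `φ = exp D`: for every `h` and every `N` with `D^[N] h = 0`,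
    `φ h = ∑_{i<N} D^i(h)/i!`.  (For a locally nilpotent `D` this characterizes
    the exponential automorphism.) -/
def IsExpOf {σ : Type*} (D : MvPolynomial σ k → MvPolynomial σ k)
    (φ : MvPolynomial σ k ≃ₐ[k] MvPolynomial σ k) : Prop :=
  ∀ (h : MvPolynomial σ k) (N : ℕ), D^[N] h = 0 →
    φ h = ∑ i ∈ Finset.range N, (Nat.factorial i : k)⁻¹ • D^[i] h

/-- `α` is an affine automorphism: `α(x_i) = ∑_j a_{j,i} x_j + b_i` with `A ∈ GL₃(k)`. -/
def IsAffine (α : MvPolynomial (Fin 3) k ≃ₐ[k] MvPolynomial (Fin 3) k) : Prop :=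
  ∃ (A : Matrix (Fin 3) (Fin 3) k) (b : Fin 3 → k), IsUnit A.det ∧
    ∀ i : Fin 3, α (X i) = (∑ j : Fin 3, C (A j i) * X j) + C (b i)

/-- `Aff_3(k)` as a set of automorphisms. -/
def AffSet : Set (MvPolynomial (Fin 3) k ≃ₐ[k] MvPolynomial (Fin 3) k) := {α | IsAffine α}

/-- `α` is a triangular automorphism: `α(x_i) = a_i x_i + f_i(x_1,…,x_{i-1})`, `a_i ≠ 0`. -/
def IsTriangular (α : MvPolynomial (Fin 3) k ≃ₐ[k] MvPolynomial (Fin 3) k) : Prop :=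
  ∃ (a : Fin 3 → k) (p : Fin 3 → MvPolynomial (Fin 3) k),
    (∀ i, a i ≠ 0) ∧ (∀ i, p i ∈ MvPolynomial.supported k {j | j < i}) ∧
    (∀ i, α (X i) = C (a i) * X i + p i)

/-- `BA_3(k)` as a set of automorphisms. -/
def TriSet : Set (MvPolynomial (Fin 3) k ≃ₐ[k] MvPolynomial (Fin 3) k) := {α | IsTriangular α}

/-- The tame subgroup `TA_3(k) = ⟨Aff_3(k), BA_3(k)⟩`. -/
def TA : Subgroup (MvPolynomial (Fin 3) k ≃ₐ[k] MvPolynomial (Fin 3) k) :=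
  Subgroup.closure (AffSet ∪ TriSet)

/-- `β = β_u = (u^3 x1, u^2 x2, u x3)`. -/
def IsBeta (u : k) (β : MvPolynomial (Fin 3) k ≃ₐ[k] MvPolynomial (Fin 3) k) : Prop :=
  β (X 0) = C (u ^ 3) * X 0 ∧ β (X 1) = C (u ^ 2) * X 1 ∧ β (X 2) = C u * X 2

/-- `B = {β_u | u ∈ k^*}`. -/
def BSet : Set (MvPolynomial (Fin 3) k ≃ₐ[k] MvPolynomial (Fin 3) k) :=
  {β | ∃ u : k, u ≠ 0 ∧ IsBeta u β}

/-! Six-variable ring `k[x1,x2,x3,t_r,t_f,t_g]`: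
variables `X 0 = x1, X 1 = x2, X 2 = x3, X 3 = t_r, X 4 = t_f, X 5 = t_g`. -/

/-- The inclusion of variable index sets. -/
def ι36 : Fin 3 → Fin 6 := Fin.castLE (by norm_num)

/-- The embedding `k[x1,x2,x3] → k[x1,x2,x3,t_r,t_f,t_g]`. -/
def embP : MvPolynomial (Fin 3) k →ₐ[k] MvPolynomial (Fin 6) k := rename ι36

/-- The substitution map `π : t_r ↦ r, t_f ↦ f, t_g ↦ g` (fixing `x1,x2,x3`). -/
def piMap : MvPolynomial (Fin 6) k →ₐ[k] MvPolynomial (Fin 3) k :=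
  aeval ![X 0, X 1, X 2, rP, fP, gP]

/-- The triangular derivation
`Δ' = -2 t_r t_f ∂/∂x1 + (4 x1 t_r - t_g) ∂/∂x2 + (6 x2 t_r + 2 t_f²) ∂/∂x3 - t_f t_g ∂/∂t_r`. -/
def Del' (p : MvPolynomial (Fin 6) k) : MvPolynomial (Fin 6) k :=
  (-(2 * X 3 * X 4)) * pderiv 0 p + (4 * X 0 * X 3 - X 5) * pderiv 1 p +
  (6 * X 1 * X 3 + 2 * X 4 ^ 2) * pderiv 2 p + (-(X 4 * X 5)) * pderiv 3 p

/-- The weight `w1 = (1,2,3,1,0,1)`. -/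
def w1 : Fin 6 → ℕ := ![1, 2, 3, 1, 0, 1]

/-- The weight `w2 = (0,0,0,0,1,0)`. -/
def w2 : Fin 6 → ℕ := ![0, 0, 0, 0, 1, 0]

/-- The sixth cyclic lexicographic order on exponent vectors: first compare the
exponent of `t_g`, then lexicographically the exponents of `x1,x2,x3,t_r,t_f`. -/
def cyclicLt (a b : Fin 6 →₀ ℕ) : Prop :=
  a 5 < b 5 ∨ (a 5 = b 5 ∧ ∃ m : Fin 5,
    (∀ l : Fin 5, l < m → a l.castSucc = b l.castSucc) ∧ a m.castSucc < b m.castSucc)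

/-- The leading monomial of `p` (for the sixth cyclic lexicographic order) is `m`. -/
def LeadMonIs (p : MvPolynomial (Fin 6) k) (m : Fin 6 →₀ ℕ) : Prop :=
  m ∈ p.support ∧ ∀ m' ∈ p.support, m' ≠ m → cyclicLt m' m

/-- The exponent vector of the monomial `t_f^δ t_g^γ`. -/
def tfMon (γ δ : ℕ) : Fin 6 →₀ ℕ := Finsupp.single 4 δ + Finsupp.single 5 γ

/-- The set `P_{γ,δ}`. -/
def Pset (γ δ : ℕ) : Set (MvPolynomial (Fin 6) k) :=
  {p | p ≠ 0 ∧ weightedTotalDegree w1 p ≤ γ ∧ weightedTotalDegree w2 p ≤ δ ∧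
    LeadMonIs p (tfMon γ δ)}

/-- `α'` is a lift of `α`. -/
def IsLift (α : MvPolynomial (Fin 3) k ≃ₐ[k] MvPolynomial (Fin 3) k)
    (α' : MvPolynomial (Fin 6) k →ₐ[k] MvPolynomial (Fin 6) k) : Prop :=
  (∀ i : Fin 3, α' (X (ι36 i)) = embP (α (X i))) ∧
  (∀ p, piMap (α' p) = α (piMap p))

/-- `t = γ_j = max {i | a_{i,j} ≠ 0}` (with rows indexed `1,2,3`). -/
def TypeIs (A : Matrix (Fin 3) (Fin 3) k) (j : Fin 3) (t : ℕ) : Prop :=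
  ∃ i : Fin 3, t = (i : ℕ) + 1 ∧ A i j ≠ 0 ∧ ∀ i' : Fin 3, i < i' → A i' j = 0

/-- Condition (C) for a lift `α'` of an affine automorphism of type `(γ1,γ2,γ3)`,
relative to `φ' = exp(uΔ')`. -/
def CondC (γ1 γ2 γ3 : ℕ) (φ' : MvPolynomial (Fin 6) k ≃ₐ[k] MvPolynomial (Fin 6) k)
    (α' : MvPolynomial (Fin 6) k →ₐ[k] MvPolynomial (Fin 6) k) : Prop :=
  ∃ m4 m5 m6 n4 n5 n6 : ℕ,
    1 ≤ n4 ∧ 1 ≤ n5 ∧ 1 ≤ n6 ∧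
    φ' (α' (X 3)) ∈ Pset m4 n4 ∧
    φ' (α' (X 4)) ∈ Pset m5 n5 ∧
    φ' (α' (X 5)) ∈ Pset m6 n6 ∧
    γ1 ≤ m6 ∧ γ2 ≤ 2 * m6 ∧ γ3 ≤ 3 * m6 ∧ m4 ≤ m6 ∧
    γ1 + 1 ≤ n6 - 1 ∧ γ2 + 1 ≤ 2 * (n6 - 1) ∧ γ3 + 1 ≤ 3 * (n6 - 1) ∧ n4 ≤ n6 - 1

/-- The image of `x_j` under the affine map given by `(A, d)`, inside the six-variable ring. -/
def affImg (A : Matrix (Fin 3) (Fin 3) k) (d : Fin 3 → k) (j : Fin 3) :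
    MvPolynomial (Fin 6) k :=
  (∑ i : Fin 3, C (A i j) * X (ι36 i)) + C (d j)

/-- The image of `t_f` under the lift `α̂`:
`α̂(t_f) = α(f) + (a_{1,1}a_{3,3} - 2a_{1,2}a_{3,2} + a_{1,3}a_{3,1})(t_f - f)`. -/
def hatTf (A : Matrix (Fin 3) (Fin 3) k) (d : Fin 3 → k) : MvPolynomial (Fin 6) k :=
  (affImg A d 0 * affImg A d 2 - affImg A d 1 ^ 2) +
    C (A 0 0 * A 2 2 - 2 * (A 0 1 * A 2 1) + A 0 2 * A 2 0) *
      (X 4 - (X 0 * X 2 - X 1 ^ 2))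

/-- The lift `α̂` of the affine automorphism given by `(A, d)`:
`α̂(x_i) = α(x_i)`, `α̂(t_f)` as in `hatTf`, `α̂(t_r) = α̂(x2 t_f + x1²)`,
`α̂(t_g) = α̂(x3 t_f² + 2 x1 x2 t_f + x1³)`. -/
def hatLift (A : Matrix (Fin 3) (Fin 3) k) (d : Fin 3 → k) :
    MvPolynomial (Fin 6) k →ₐ[k] MvPolynomial (Fin 6) k :=
  aeval ![affImg A d 0, affImg A d 1, affImg A d 2,
    affImg A d 1 * hatTf A d + affImg A d 0 ^ 2,
    hatTf A d,
    affImg A d 2 * hatTf A d ^ 2 + 2 * affImg A d 0 * affImg A d 1 * hatTf A d +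
      affImg A d 0 ^ 3]


end YasudaPaper

/-!
`φ' = exp(uΔ')` fixes `t_f` and sends `x_i` to a polynomial with leading monomial
`t_f^{i+1} t_g^i`, all other monomials having strictly smaller `(deg_{w1}, deg_{w2})`-bidegree
than `(i, i+1)`. Membership in `P_{γ,δ}` depends only on the bidegree and on the coefficient of
`t_f^δ t_g^γ`; hence it is multiplicative and survives adding terms of smaller bidegree, and
`Y_j := φ'(α(x_j))` lies in `P_{γ_j, γ_j+1}`. In `T := φ'(α̂(t_f))` the products
`φ'(x1) φ'(x3)` cancel; what is left is a constant plus a combination of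
`t_f, φ'(x1), φ'(x2), φ'(x1)², φ'(x3), φ'(x1)φ'(x2), φ'(x2)²`, whose bidegrees form a chain, and
`t_f` has the coefficient `a_{1,3} a_{3,1} ≠ 0`. So `T ∈ P_{4,6}` if `a_{1,3} a_{3,1} ≠ a_{2,2}²`,
and `T ∈ P_{γ,δ}` for some `(0,1) ≤ (γ,δ) ≤ (3,5)` otherwise. Either way
`φ'(α̂(t_r)) = Y_2 T + Y_1²` and `φ'(α̂(t_g)) = Y_3 T² + 2 Y_1 Y_2 T + Y_1³` each have a single
dominant summand, which gives condition (C).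
-/

namespace MvPolynomial

section WeightedTotalDegree

variable {σ R M : Type*} [CommSemiring R] [AddCommMonoid M] [SemilatticeSup M] [OrderBot M]
  (w : σ → M)

theorem weightedTotalDegree_add_le (p q : MvPolynomial σ R) :
    weightedTotalDegree w (p + q) ≤ weightedTotalDegree w p ⊔ weightedTotalDegree w q := by
  classical
  refine Finset.sup_le fun m hm => ?_
  rcases Finset.mem_union.mp (support_add hm) with h | h
  · exact le_sup_of_le_left (le_weightedTotalDegree w h)
  · exact le_sup_of_le_right (le_weightedTotalDegree w h)

theorem weightedTotalDegree_mul_le [IsOrderedAddMonoid M] (p q : MvPolynomial σ R) :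
    weightedTotalDegree w (p * q) ≤ weightedTotalDegree w p + weightedTotalDegree w q := by
  classical
  refine Finset.sup_le fun m hm => ?_
  obtain ⟨a, ha, b, hb, rfl⟩ := Finset.mem_add.mp (support_mul p q hm)
  rw [map_add]
  exact add_le_add (le_weightedTotalDegree w ha) (le_weightedTotalDegree w hb)

theorem weightedTotalDegree_monomial_le (m : σ →₀ ℕ) (r : R) :
    weightedTotalDegree w (monomial m r) ≤ Finsupp.weight w m :=
  Finset.sup_le fun _ hm => by rw [Finset.mem_singleton.mp (support_monomial_subset hm)]

theorem weightedTotalDegree_C_le (r : R) : weightedTotalDegree w (C r : MvPolynomial σ R) ≤ 0 :=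
  (weightedTotalDegree_monomial_le w 0 r).trans (map_zero _).le

theorem weightedTotalDegree_X_le (i : σ) :
    weightedTotalDegree w (X i : MvPolynomial σ R) ≤ w i :=
  (weightedTotalDegree_monomial_le w _ _).trans (by simp [Finsupp.weight_single])

theorem weightedTotalDegree_pow_le [IsOrderedAddMonoid M] (p : MvPolynomial σ R) (n : ℕ) :
    weightedTotalDegree w (p ^ n) ≤ n • weightedTotalDegree w p := by
  induction n with
  | zero => simpa using weightedTotalDegree_C_le w (1 : R)
  | succ n ih =>
    rw [pow_succ, succ_nsmul]
    exact (weightedTotalDegree_mul_le w _ _).trans (add_le_add_left ih _)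

theorem weightedTotalDegree_C_mul_le (r : R) (p : MvPolynomial σ R) :
    weightedTotalDegree w (C r * p) ≤ weightedTotalDegree w p := by
  rw [C_mul']
  exact Finset.sup_mono support_smul

theorem weightedTotalDegree_neg {R' : Type*} [CommRing R'] (p : MvPolynomial σ R') :
    weightedTotalDegree w (-p) = weightedTotalDegree w p := by
  simp [weightedTotalDegree, support_neg]

end WeightedTotalDegree

end MvPolynomial

namespace Derivation

@[simp]
theorem map_ofNat {R A M : Type*} [CommSemiring R] [CommSemiring A] [AddCommMonoid M]
    [Algebra R A] [Module A M] [Module R M] (D : Derivation R A M) (n : ℕ) [n.AtLeastTwo] :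
    D (ofNat(n) : A) = 0 :=
  D.map_natCast n

end Derivation

namespace YasudaPaper

variable {k : Type*} [Field k]

def bideg (p : MvPolynomial (Fin 6) k) : ℕ × ℕ :=
  (weightedTotalDegree w1 p, weightedTotalDegree w2 p)

section Bidegree

variable {p q : MvPolynomial (Fin 6) k} {a b : ℕ × ℕ}

theorem bideg_add_le (hp : bideg p ≤ a) (hq : bideg q ≤ b) : bideg (p + q) ≤ a ⊔ b :=
  ⟨(weightedTotalDegree_add_le w1 p q).trans (sup_le_sup hp.1 hq.1),
    (weightedTotalDegree_add_le w2 p q).trans (sup_le_sup hp.2 hq.2)⟩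

theorem bideg_mul_le (hp : bideg p ≤ a) (hq : bideg q ≤ b) : bideg (p * q) ≤ a + b :=
  ⟨(weightedTotalDegree_mul_le w1 p q).trans (add_le_add hp.1 hq.1),
    (weightedTotalDegree_mul_le w2 p q).trans (add_le_add hp.2 hq.2)⟩

theorem bideg_pow_le (hp : bideg p ≤ a) (n : ℕ) : bideg (p ^ n) ≤ n • a :=
  ⟨(weightedTotalDegree_pow_le w1 p n).trans (nsmul_le_nsmul_right hp.1 n),
    (weightedTotalDegree_pow_le w2 p n).trans (nsmul_le_nsmul_right hp.2 n)⟩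

theorem bideg_neg_le (hp : bideg p ≤ a) : bideg (-p) ≤ a := by
  rwa [bideg, weightedTotalDegree_neg, weightedTotalDegree_neg]

theorem bideg_sub_le (hp : bideg p ≤ a) (hq : bideg q ≤ b) : bideg (p - q) ≤ a ⊔ b :=
  sub_eq_add_neg p q ▸ bideg_add_le hp (bideg_neg_le hq)

theorem bideg_C_mul_le (r : k) (hp : bideg p ≤ a) : bideg (C r * p) ≤ a :=
  ⟨(weightedTotalDegree_C_mul_le w1 r p).trans hp.1,
    (weightedTotalDegree_C_mul_le w2 r p).trans hp.2⟩

theorem bideg_C_le (r : k) : bideg (C r : MvPolynomial (Fin 6) k) ≤ 0 :=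
  ⟨weightedTotalDegree_C_le w1 r, weightedTotalDegree_C_le w2 r⟩

theorem bideg_ofNat_le (n : ℕ) [n.AtLeastTwo] :
    bideg (ofNat(n) : MvPolynomial (Fin 6) k) ≤ 0 := by
  rw [← map_ofNat (C : k →+* MvPolynomial (Fin 6) k) n]
  exact bideg_C_le _

theorem bideg_X_le (i : Fin 6) : bideg (X i : MvPolynomial (Fin 6) k) ≤ (w1 i, w2 i) :=
  ⟨weightedTotalDegree_X_le w1 i, weightedTotalDegree_X_le w2 i⟩

theorem weight_le_bideg {m : Fin 6 →₀ ℕ} (hm : m ∈ p.support) :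
    (Finsupp.weight w1 m, Finsupp.weight w2 m) ≤ bideg p :=
  ⟨le_weightedTotalDegree w1 hm, le_weightedTotalDegree w2 hm⟩

theorem bideg_sum_le {ι : Type*} {s : Finset ι} {f : ι → MvPolynomial (Fin 6) k} {c : ℕ × ℕ}
    (h : ∀ i ∈ s, bideg (f i) ≤ c) : bideg (∑ i ∈ s, f i) ≤ c := by
  classical
  induction s using Finset.induction_on with
  | empty => simpa using (bideg_C_le (0 : k)).trans zero_le
  | insert i s hi ih =>
    rw [Finset.sum_insert hi]
    exact (bideg_add_le (h i (Finset.mem_insert_self i s))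
      (ih fun j hj => h j (Finset.mem_insert_of_mem hj))).trans (sup_le le_rfl le_rfl)

end Bidegree

theorem weight_w1_apply (m : Fin 6 →₀ ℕ) :
    Finsupp.weight w1 m = m 0 + 2 * m 1 + 3 * m 2 + m 3 + m 5 := by
  simp [Finsupp.weight_apply, Finsupp.sum_fintype, Fin.sum_univ_six, w1]
  ring

theorem weight_w2_apply (m : Fin 6 →₀ ℕ) : Finsupp.weight w2 m = m 4 := by
  simp [Finsupp.weight_apply, Finsupp.sum_fintype, Fin.sum_univ_six, w2]

theorem tfMon_apply (γ δ : ℕ) (i : Fin 6) :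
    tfMon γ δ i = if i = 4 then δ else if i = 5 then γ else 0 := by
  fin_cases i <;> simp [tfMon]

theorem eq_tfMon_of_weight_le {m : Fin 6 →₀ ℕ} {γ δ : ℕ} (h1 : Finsupp.weight w1 m ≤ γ)
    (h2 : Finsupp.weight w2 m ≤ δ) (hγ : γ ≤ m 5) (hδ : δ ≤ m 4) : m = tfMon γ δ := by
  rw [weight_w1_apply] at h1
  rw [weight_w2_apply] at h2
  ext i
  fin_cases i <;> simp [tfMon_apply] <;> omega

theorem mem_Pset_iff {p : MvPolynomial (Fin 6) k} {γ δ : ℕ} :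
    p ∈ Pset γ δ ↔ bideg p ≤ (γ, δ) ∧ coeff (tfMon γ δ) p ≠ 0 := by
  refine ⟨fun ⟨_, h1, h2, hlead, _⟩ => ⟨⟨h1, h2⟩, mem_support_iff.mp hlead⟩, ?_⟩
  rintro ⟨hp, hc⟩
  refine ⟨fun h => hc (by simp [h]), hp.1, hp.2, mem_support_iff.mpr hc, fun m hm hne => ?_⟩
  obtain ⟨h1, h2⟩ := (weight_le_bideg hm).trans hp
  have h5 : tfMon γ δ 5 = γ := by simp [tfMon_apply]
  rcases lt_or_ge (m 5) γ with hlt | hge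
  · exact Or.inl (by rwa [h5])
  have h4 : m 4 < δ := by
    by_contra! h4
    exact hne (eq_tfMon_of_weight_le h1 h2 hge h4)
  rw [weight_w1_apply] at h1
  rw [weight_w2_apply] at h2
  refine Or.inr ⟨by omega, 4, fun l hl => ?_, by simpa [tfMon_apply] using h4⟩
  fin_cases l <;> simp [tfMon_apply] at hl ⊢ <;> omega

theorem coeff_tfMon_eq_zero {q : MvPolynomial (Fin 6) k} {γ δ : ℕ}
    (h : ¬ (γ, δ) ≤ bideg q) : coeff (tfMon γ δ) q = 0 := by
  contrapose! h
  have := weight_le_bideg (mem_support_iff.mpr h)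
  simpa [weight_w1_apply, weight_w2_apply, tfMon_apply] using this

theorem tfMon_add (γ δ γ' δ' : ℕ) : tfMon γ δ + tfMon γ' δ' = tfMon (γ + γ') (δ + δ') := by
  ext i
  simp only [Finsupp.add_apply, tfMon_apply]
  split_ifs <;> omega

theorem coeff_tfMon_mul {p q : MvPolynomial (Fin 6) k} {γ δ γ' δ' : ℕ}
    (hp : bideg p ≤ (γ, δ)) (hq : bideg q ≤ (γ', δ')) :
    coeff (tfMon (γ + γ') (δ + δ')) (p * q) = coeff (tfMon γ δ) p * coeff (tfMon γ' δ') q := by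
  classical
  rw [coeff_mul, ← tfMon_add]
  refine Finset.sum_eq_single_of_mem (tfMon γ δ, tfMon γ' δ')
    (Finset.HasAntidiagonal.mem_antidiagonal.mpr rfl) ?_
  rintro ⟨a, b⟩ hab hne
  rw [Finset.HasAntidiagonal.mem_antidiagonal, tfMon_add] at hab
  by_contra hc
  obtain ⟨ha, hb⟩ := ne_zero_and_ne_zero_of_mul hc
  obtain ⟨ha1, ha2⟩ := (weight_le_bideg (mem_support_iff.mpr ha)).trans hp
  obtain ⟨hb1, hb2⟩ := (weight_le_bideg (mem_support_iff.mpr hb)).trans hq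
  dsimp only at ha1 ha2 hb1 hb2
  have h4 : a 4 + b 4 = δ + δ' := by simpa [tfMon_apply] using congrArg (· 4) hab
  have h5 : a 5 + b 5 = γ + γ' := by simpa [tfMon_apply] using congrArg (· 5) hab
  have ha5 : a 5 ≤ γ := by rw [weight_w1_apply] at ha1; omega
  have hb5 : b 5 ≤ γ' := by rw [weight_w1_apply] at hb1; omega
  rw [weight_w2_apply] at ha2 hb2
  have hA : a = tfMon γ δ :=
    eq_tfMon_of_weight_le ha1 (by rwa [weight_w2_apply]) (by omega) (by omega)
  have hB : b = tfMon γ' δ' :=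
    eq_tfMon_of_weight_le hb1 (by rwa [weight_w2_apply]) (by omega) (by omega)
  exact hne (by rw [hA, hB])

section Pset

variable {p q : MvPolynomial (Fin 6) k} {γ δ γ' δ' : ℕ}

theorem bideg_le_of_mem_Pset (hp : p ∈ Pset γ δ) : bideg p ≤ (γ, δ) := (mem_Pset_iff.mp hp).1

theorem mul_mem_Pset (hp : p ∈ Pset γ δ) (hq : q ∈ Pset γ' δ') :
    p * q ∈ Pset (γ + γ') (δ + δ') := by
  rw [mem_Pset_iff] at hp hq ⊢
  exact ⟨bideg_mul_le hp.1 hq.1, by rw [coeff_tfMon_mul hp.1 hq.1]; exact mul_ne_zero hp.2 hq.2⟩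

theorem one_mem_Pset : (1 : MvPolynomial (Fin 6) k) ∈ Pset 0 0 := by
  rw [mem_Pset_iff, ← C_1]
  exact ⟨bideg_C_le 1, by simp [tfMon]⟩

theorem pow_mem_Pset (hp : p ∈ Pset γ δ) (n : ℕ) : p ^ n ∈ Pset (n * γ) (n * δ) := by
  induction n with
  | zero => simpa using one_mem_Pset
  | succ n ih => simpa [pow_succ, add_mul] using mul_mem_Pset ih hp

theorem C_mul_mem_Pset {r : k} (hr : r ≠ 0) (hp : p ∈ Pset γ δ) : C r * p ∈ Pset γ δ := by
  rw [mem_Pset_iff] at hp ⊢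
  exact ⟨bideg_C_mul_le r hp.1, by rw [coeff_C_mul]; exact mul_ne_zero hr hp.2⟩

theorem add_mem_Pset_of_bideg_lt (hp : p ∈ Pset γ δ) (hq : bideg q < (γ, δ)) :
    p + q ∈ Pset γ δ := by
  rw [mem_Pset_iff] at hp ⊢
  refine ⟨(bideg_add_le hp.1 hq.le).trans (sup_le le_rfl le_rfl), ?_⟩
  rw [coeff_add, coeff_tfMon_eq_zero (not_le_of_gt hq), add_zero]
  exact hp.2

theorem C_mul_add_mem_Pset {r : k} (hr : r ≠ 0) (hp : p ∈ Pset γ δ) (hq : bideg q < (γ, δ)) :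
    C r * p + q ∈ Pset γ δ :=
  add_mem_Pset_of_bideg_lt (C_mul_mem_Pset hr hp) hq

theorem monomial_tfMon_mem_Pset {c : k} (hc : c ≠ 0) :
    monomial (tfMon γ δ) c ∈ Pset γ δ := by
  rw [mem_Pset_iff, coeff_monomial, if_pos rfl]
  refine ⟨⟨(weightedTotalDegree_monomial_le _ _ _).trans ?_,
    (weightedTotalDegree_monomial_le _ _ _).trans ?_⟩, hc⟩ <;>
  simp [weight_w1_apply, weight_w2_apply, tfMon_apply]

theorem X_four_mem_Pset : (X 4 : MvPolynomial (Fin 6) k) ∈ Pset 0 1 := by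
  rw [mem_Pset_iff]
  exact ⟨bideg_X_le 4, by simp [tfMon, coeff_X]⟩

def PsetIcc (a b : ℕ × ℕ) : Set (MvPolynomial (Fin 6) k) :=
  {p | ∃ c ∈ Set.Icc a b, p ∈ Pset c.1 c.2}

theorem mem_PsetIcc_of_mem_Pset (hp : p ∈ Pset γ δ) : p ∈ PsetIcc (γ, δ) (γ, δ) :=
  ⟨(γ, δ), Set.left_mem_Icc.mpr le_rfl, hp⟩

theorem bideg_le_of_mem_PsetIcc {a b : ℕ × ℕ} (hp : p ∈ PsetIcc a b) : bideg p ≤ b := by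
  obtain ⟨c, hc, hp⟩ := hp
  exact (bideg_le_of_mem_Pset hp).trans hc.2

theorem C_mul_add_mem_PsetIcc {a b c : ℕ × ℕ} (hp : p ∈ Pset c.1 c.2) (hq : q ∈ PsetIcc a b)
    (hbc : b < c) (r : k) : C r * p + q ∈ PsetIcc a c := by
  obtain ⟨c', hc', hq'⟩ := hq
  by_cases hr : r = 0
  · simpa [hr] using ⟨c', ⟨hc'.1, hc'.2.trans hbc.le⟩, hq'⟩
  · exact ⟨c, ⟨hc'.1.trans (hc'.2.trans hbc.le), le_rfl⟩, add_mem_Pset_of_bideg_lt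
      (C_mul_mem_Pset hr hp) ((bideg_le_of_mem_Pset hq').trans_lt (hc'.2.trans_lt hbc))⟩

end Pset

def Del'Derivation : Derivation k (MvPolynomial (Fin 6) k) (MvPolynomial (Fin 6) k) :=
  (-(2 * X 3 * X 4) : MvPolynomial (Fin 6) k) • pderiv 0 +
    (4 * X 0 * X 3 - X 5 : MvPolynomial (Fin 6) k) • pderiv 1 +
    (6 * X 1 * X 3 + 2 * X 4 ^ 2 : MvPolynomial (Fin 6) k) • pderiv 2 +
    (-(X 4 * X 5) : MvPolynomial (Fin 6) k) • pderiv 3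

theorem coe_Del'Derivation : ⇑(Del'Derivation (k := k)) = Del' := by
  ext p : 1
  simp [Del'Derivation, Del']

theorem Del'Derivation_X (i : Fin 6) :
    Del'Derivation (X i : MvPolynomial (Fin 6) k) =
      ![-(2 * X 3 * X 4), 4 * X 0 * X 3 - X 5, 6 * X 1 * X 3 + 2 * X 4 ^ 2, -(X 4 * X 5), 0,
        0] i := by
  fin_cases i <;> simp [Del'Derivation, pderiv_X]

theorem monomial_tfMon (γ δ : ℕ) (c : k) :
    monomial (tfMon γ δ) c = C c * X 4 ^ δ * X 5 ^ γ := by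
  rw [mul_assoc, X_pow_eq_monomial, X_pow_eq_monomial, monomial_mul, C_mul_monomial, mul_one,
    mul_one, tfMon]

section Exponential

variable [CharZero k] {u : k} {φ' : MvPolynomial (Fin 6) k ≃ₐ[k] MvPolynomial (Fin 6) k}

theorem IsExpOf.apply_eq_sum {σ : Type*} {D : MvPolynomial σ k → MvPolynomial σ k}
    {φ : MvPolynomial σ k ≃ₐ[k] MvPolynomial σ k} (hφ : IsExpOf D φ)
    (hD : ∀ (c : k) p, D (c • p) = c • D p) (a : ℕ → MvPolynomial σ k) (N : ℕ)
    (ha : ∀ i, D (a i) = ((i + 1 : ℕ) : k) • a (i + 1)) (hN : a N = 0) :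
    φ (a 0) = ∑ i ∈ Finset.range N, a i := by
  have hiter : ∀ i, D^[i] (a 0) = (i.factorial : k) • a i := by
    intro i
    induction i with
    | zero => simp
    | succ i ih =>
      rw [Function.iterate_succ_apply', ih, hD, ha, smul_smul, Nat.factorial_succ, Nat.cast_mul,
        mul_comm]
  rw [hφ _ N (by rw [hiter, hN, smul_zero])]
  refine Finset.sum_congr rfl fun i _ => ?_
  rw [hiter, smul_smul, inv_mul_cancel₀ (by exact_mod_cast i.factorial_ne_zero), one_smul]

theorem IsExpOf.apply_eq_sum_of_Del' (hφ : IsExpOf (fun p => u • Del' p) φ')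
    (a : ℕ → MvPolynomial (Fin 6) k) (N : ℕ)
    (ha : ∀ i, C u * Del'Derivation (a i) = (i + 1 : MvPolynomial (Fin 6) k) * a (i + 1))
    (hN : a N = 0) : φ' (a 0) = ∑ i ∈ Finset.range N, a i :=
  hφ.apply_eq_sum (fun c p => by rw [← coe_Del'Derivation, Derivation.map_smul, smul_comm]) a N
    (fun i => by simpa [smul_eq_C_mul, ← coe_Del'Derivation] using ha i) hN

theorem IsExpOf.apply_X_zero (hφ : IsExpOf (fun p => u • Del' p) φ') :
    φ' (X 0) = X 0 - 2 * C u * X 3 * X 4 + monomial (tfMon 1 2) (u ^ 2) := by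
  have := hφ.apply_eq_sum_of_Del'
    (fun i => [X 0, -(2 * C u * X 3 * X 4), C u ^ 2 * X 4 ^ 2 * X 5].getD i 0) 3
    (by rintro (_ | _ | _ | i) <;>
      simp only [List.getD_cons_zero, List.getD_cons_succ, List.getD_nil, map_neg, map_zero,
        Derivation.leibniz, Derivation.leibniz_pow, derivation_C, Derivation.map_ofNat,
        Del'Derivation_X, Matrix.cons_val, smul_eq_mul, nsmul_eq_mul] <;> ring) rfl
  rw [List.getD_cons_zero] at this
  rw [this, monomial_tfMon]
  simp only [Finset.sum_range_succ, Finset.sum_range_zero, List.getD_cons_zero,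
    List.getD_cons_succ, zero_add, C_pow]
  ring

theorem IsExpOf.apply_X_one (hφ : IsExpOf (fun p => u • Del' p) φ') :
    φ' (X 1) = X 1 + C u * (4 * X 0 * X 3 - X 5)
      - C u ^ 2 * (4 * X 3 ^ 2 * X 4 + 2 * X 0 * X 4 * X 5) + 4 * C u ^ 3 * X 3 * X 4 ^ 2 * X 5
      + monomial (tfMon 2 3) (-u ^ 4) := by
  have := hφ.apply_eq_sum_of_Del'
    (fun i => [X 1, C u * (4 * X 0 * X 3 - X 5),
      -(C u ^ 2 * (4 * X 3 ^ 2 * X 4 + 2 * X 0 * X 4 * X 5)),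
      4 * C u ^ 3 * X 3 * X 4 ^ 2 * X 5, -(C u ^ 4 * X 4 ^ 3 * X 5 ^ 2)].getD i 0) 5
    (by rintro (_ | _ | _ | _ | _ | i) <;>
      simp only [List.getD_cons_zero, List.getD_cons_succ, List.getD_nil, map_add, map_sub, map_neg,
        map_zero, Derivation.leibniz, Derivation.leibniz_pow, derivation_C, Derivation.map_ofNat,
        Del'Derivation_X, Matrix.cons_val, smul_eq_mul, nsmul_eq_mul] <;> ring) rfl
  rw [List.getD_cons_zero] at this
  rw [this, monomial_tfMon]
  simp only [Finset.sum_range_succ, Finset.sum_range_zero, List.getD_cons_zero,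
    List.getD_cons_succ, zero_add, C_neg, C_pow]
  ring

theorem IsExpOf.apply_X_two (hφ : IsExpOf (fun p => u • Del' p) φ') :
    φ' (X 2) = X 2 + C u * (6 * X 1 * X 3 + 2 * X 4 ^ 2)
      + C u ^ 2 * (12 * X 0 * X 3 ^ 2 - 3 * X 3 * X 5 - 3 * X 1 * X 4 * X 5)
      - C u ^ 3 * (8 * X 3 ^ 3 * X 4 + 12 * X 0 * X 3 * X 4 * X 5 - 2 * X 4 * X 5 ^ 2)
      + C u ^ 4 * (12 * X 3 ^ 2 * X 4 ^ 2 * X 5 + 3 * X 0 * X 4 ^ 2 * X 5 ^ 2)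
      - 6 * C u ^ 5 * X 3 * X 4 ^ 3 * X 5 ^ 2 + monomial (tfMon 3 4) (u ^ 6) := by
  have := hφ.apply_eq_sum_of_Del'
    (fun i => [X 2, C u * (6 * X 1 * X 3 + 2 * X 4 ^ 2),
      C u ^ 2 * (12 * X 0 * X 3 ^ 2 - 3 * X 3 * X 5 - 3 * X 1 * X 4 * X 5),
      -(C u ^ 3 * (8 * X 3 ^ 3 * X 4 + 12 * X 0 * X 3 * X 4 * X 5 - 2 * X 4 * X 5 ^ 2)),
      C u ^ 4 * (12 * X 3 ^ 2 * X 4 ^ 2 * X 5 + 3 * X 0 * X 4 ^ 2 * X 5 ^ 2),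
      -(6 * C u ^ 5 * X 3 * X 4 ^ 3 * X 5 ^ 2), C u ^ 6 * X 4 ^ 4 * X 5 ^ 3].getD i 0) 7
    (by rintro (_ | _ | _ | _ | _ | _ | _ | i) <;>
      simp only [List.getD_cons_zero, List.getD_cons_succ, List.getD_nil, map_add, map_sub, map_neg,
        map_zero, Derivation.leibniz, Derivation.leibniz_pow, derivation_C, Derivation.map_ofNat,
        Del'Derivation_X, Matrix.cons_val, smul_eq_mul, nsmul_eq_mul] <;> ring) rfl
  rw [List.getD_cons_zero] at this
  rw [this, monomial_tfMon]
  simp only [Finset.sum_range_succ, Finset.sum_range_zero, List.getD_cons_zero,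
    List.getD_cons_succ, zero_add, C_pow]
  ring

theorem IsExpOf.apply_X_four (hφ : IsExpOf (fun p => u • Del' p) φ') : φ' (X 4) = X 4 := by
  simpa using hφ.apply_eq_sum_of_Del' (fun i => [X 4].getD i 0) 1
    (by rintro (_ | i) <;> simp [Del'Derivation_X]) rfl

theorem IsExpOf.apply_X_zero_mem_Pset (hφ : IsExpOf (fun p => u • Del' p) φ') (hu : u ≠ 0) :
    φ' (X 0) ∈ Pset 1 2 := by
  rw [hφ.apply_X_zero, add_comm]
  refine add_mem_Pset_of_bideg_lt (monomial_tfMon_mem_Pset (pow_ne_zero 2 hu)) ?_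
  apply lt_of_le_of_lt
  -- `with_reducible` keeps `apply` from unfolding `X` and `C` while matching
  · repeat' with_reducible first
      | apply bideg_add_le | apply bideg_sub_le | apply bideg_mul_le | apply bideg_pow_le
      | exact bideg_X_le _ | exact bideg_C_le _ | exact bideg_ofNat_le _
  · rw [Prod.lt_iff]; decide

theorem IsExpOf.apply_X_one_mem_Pset (hφ : IsExpOf (fun p => u • Del' p) φ') (hu : u ≠ 0) :
    φ' (X 1) ∈ Pset 2 3 := by
  rw [hφ.apply_X_one, add_comm]
  refine add_mem_Pset_of_bideg_lt (monomial_tfMon_mem_Pset (neg_ne_zero.mpr (pow_ne_zero 4 hu)))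
    ?_
  apply lt_of_le_of_lt
  · repeat' with_reducible first
      | apply bideg_add_le | apply bideg_sub_le | apply bideg_mul_le | apply bideg_pow_le
      | exact bideg_X_le _ | exact bideg_C_le _ | exact bideg_ofNat_le _
  · rw [Prod.lt_iff]; decide

theorem IsExpOf.apply_X_two_mem_Pset (hφ : IsExpOf (fun p => u • Del' p) φ') (hu : u ≠ 0) :
    φ' (X 2) ∈ Pset 3 4 := by
  rw [hφ.apply_X_two, add_comm]
  refine add_mem_Pset_of_bideg_lt (monomial_tfMon_mem_Pset (pow_ne_zero 6 hu)) ?_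
  apply lt_of_le_of_lt
  · repeat' with_reducible first
      | apply bideg_add_le | apply bideg_sub_le | apply bideg_mul_le | apply bideg_pow_le
      | exact bideg_X_le _ | exact bideg_C_le _ | exact bideg_ofNat_le _
  · rw [Prod.lt_iff]; decide

end Exponential

theorem TypeIs.apply_eq_zero {A : Matrix (Fin 3) (Fin 3) k} {j : Fin 3} {t : ℕ}
    (ht : TypeIs A j t) (i : Fin 3) (hi : t ≤ i) : A i j = 0 := by
  obtain ⟨i₀, rfl, -, hz⟩ := ht
  exact hz i (Fin.lt_def.mpr (by omega))

theorem TypeIs.apply_ne_zero {A : Matrix (Fin 3) (Fin 3) k} {j : Fin 3} {t : ℕ}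
    (ht : TypeIs A j t) (i : Fin 3) (hi : (i : ℕ) + 1 = t) : A i j ≠ 0 := by
  obtain ⟨i₀, rfl, hne, -⟩ := ht
  rwa [Fin.ext (Nat.succ_injective hi)]

theorem map_affImg_mem_Pset {φ' : MvPolynomial (Fin 6) k ≃ₐ[k] MvPolynomial (Fin 6) k}
    (hP : ∀ i : Fin 3, φ' (X (ι36 i)) ∈ Pset (i + 1) (i + 2)) {A : Matrix (Fin 3) (Fin 3) k}
    {d : Fin 3 → k} {j : Fin 3} {t : ℕ} (ht : TypeIs A j t) :
    φ' (affImg A d j) ∈ Pset t (t + 1) := by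
  obtain ⟨i, rfl, hi, hz⟩ := ht
  have hC : ∀ a, φ' (C a) = C a := φ'.commutes
  rw [affImg, map_add, map_sum, ← Finset.add_sum_erase _ _ (Finset.mem_univ i)]
  simp only [map_mul, hC]
  rw [add_assoc (C (A i j) * _)]
  have hPi : φ' (X (ι36 i)) ∈ Pset (i + 1) (i + 1 + 1) := hP i
  refine C_mul_add_mem_Pset hi hPi
    (lt_of_le_of_lt (b := ((i : ℕ), (i : ℕ) + 1)) ?_ (by rw [Prod.lt_iff]; omega))
  refine (bideg_add_le (bideg_sum_le fun i' hi' => ?_) (bideg_C_le _)).trans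
    (sup_le le_rfl zero_le)
  rcases lt_or_gt_of_ne (Finset.ne_of_mem_erase hi') with h | h
  · exact bideg_C_mul_le _ ((bideg_le_of_mem_Pset (hP i')).trans
      ⟨by simp only; omega, by simp only; omega⟩)
  · rw [hz i' h, C_0, zero_mul]
    simpa using (bideg_C_le (0 : k)).trans zero_le

/-- The bidegrees `(0,1) < (1,2) < (2,3) < (2,4) < (3,4) < (3,5)` of
`t_f, P₁, P₂, P₁², P₃, P₁P₂` form a chain, so each new summand either vanishes or dominates. -/
theorem chain_mem_PsetIcc {P₁ P₂ P₃ : MvPolynomial (Fin 6) k} (h₁ : P₁ ∈ Pset 1 2)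
    (h₂ : P₂ ∈ Pset 2 3) (h₃ : P₃ ∈ Pset 3 4) {r₀ : k} (hr₀ : r₀ ≠ 0) (r₁ r₂ r₃ r₄ r₅ r₆ : k) :
    C r₆ * (P₁ * P₂) + (C r₅ * P₃ + (C r₄ * P₁ ^ 2 + (C r₃ * P₂ + (C r₂ * P₁ +
      (C r₀ * X 4 + C r₁))))) ∈ PsetIcc (0, 1) (3, 5) := by
  have h₀ : C r₀ * X 4 + C r₁ ∈ PsetIcc (0, 1) (0, 1) :=
    mem_PsetIcc_of_mem_Pset (C_mul_add_mem_Pset hr₀ X_four_mem_Pset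
      ((bideg_C_le r₁).trans_lt (by rw [Prod.lt_iff]; decide)))
  refine C_mul_add_mem_PsetIcc (mul_mem_Pset h₁ h₂) ?_ (b := (3, 4))
    (by rw [Prod.lt_iff]; decide) _
  refine C_mul_add_mem_PsetIcc h₃ ?_ (b := (2, 4)) (by rw [Prod.lt_iff]; decide) _
  refine C_mul_add_mem_PsetIcc (pow_mem_Pset h₁ 2) ?_ (b := (2, 3))
    (by rw [Prod.lt_iff]; decide) _
  refine C_mul_add_mem_PsetIcc h₂ ?_ (b := (1, 2)) (by rw [Prod.lt_iff]; decide) _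
  exact C_mul_add_mem_PsetIcc h₁ h₀ (by rw [Prod.lt_iff]; decide) _

theorem map_hatTf_eq {φ' : MvPolynomial (Fin 6) k ≃ₐ[k] MvPolynomial (Fin 6) k}
    (h₄ : φ' (X 4) = X 4) {A : Matrix (Fin 3) (Fin 3) k} (d : Fin 3 → k)
    (hA₂₁ : A 2 1 = 0) (hA₁₂ : A 1 2 = 0) (hA₂₂ : A 2 2 = 0) :
    φ' (hatTf A d) = C (A 0 2 * A 2 0 - A 1 1 ^ 2) * φ' (X 1) ^ 2 +
      (C (A 0 2 * A 1 0 - 2 * A 0 1 * A 1 1) * (φ' (X 0) * φ' (X 1)) +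
      (C (A 2 0 * d 2) * φ' (X 2) +
      (C (A 0 0 * A 0 2 - A 0 1 ^ 2) * φ' (X 0) ^ 2 +
      (C (A 1 0 * d 2 - 2 * A 1 1 * d 1) * φ' (X 1) +
      (C (A 0 2 * d 0 + A 0 0 * d 2 - 2 * A 0 1 * d 1) * φ' (X 0) +
      (C (A 0 2 * A 2 0) * X 4 + C (d 0 * d 2 - d 1 ^ 2))))))) := by
  have hC : ∀ a, φ' (C a) = C a := φ'.commutes
  have hι : ι36 0 = 0 ∧ ι36 1 = 1 ∧ ι36 2 = 2 := ⟨rfl, rfl, rfl⟩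
  -- the terms `a₁₃ a₃₁ φ'(x1) φ'(x3)` of `α(f)` and of the correction `a₁₃ a₃₁ (t_f - f)` cancel
  simp only [hatTf, affImg, Fin.sum_univ_three, hι, map_add, map_sub, map_mul, map_pow, hC, h₄,
    hA₂₁, hA₁₂, hA₂₂]
  simp only [map_ofNat, C_0]
  ring

theorem map_hatTf_mem {φ' : MvPolynomial (Fin 6) k ≃ₐ[k] MvPolynomial (Fin 6) k}
    (h₄ : φ' (X 4) = X 4) (hP : ∀ i : Fin 3, φ' (X (ι36 i)) ∈ Pset (i + 1) (i + 2))
    {A : Matrix (Fin 3) (Fin 3) k} (d : Fin 3 → k)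
    (ht₁ : TypeIs A 0 3) (ht₂ : TypeIs A 1 2) (ht₃ : TypeIs A 2 1) :
    φ' (hatTf A d) ∈ Pset 4 6 ∨ φ' (hatTf A d) ∈ PsetIcc (0, 1) (3, 5) := by
  rw [map_hatTf_eq h₄ d (ht₂.apply_eq_zero 2 (by simp)) (ht₃.apply_eq_zero 1 (by simp))
    (ht₃.apply_eq_zero 2 (by simp))]
  have hP₀ : φ' (X 0) ∈ Pset 1 2 := hP 0
  have hP₁ : φ' (X 1) ∈ Pset 2 3 := hP 1
  have hR := chain_mem_PsetIcc hP₀ hP₁ (hP 2)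
    (mul_ne_zero (ht₃.apply_ne_zero 0 rfl) (ht₁.apply_ne_zero 2 rfl)) (d 0 * d 2 - d 1 ^ 2)
    (A 0 2 * d 0 + A 0 0 * d 2 - 2 * A 0 1 * d 1) (A 1 0 * d 2 - 2 * A 1 1 * d 1)
    (A 0 0 * A 0 2 - A 0 1 ^ 2) (A 2 0 * d 2) (A 0 2 * A 1 0 - 2 * A 0 1 * A 1 1)
  by_cases he : A 0 2 * A 2 0 - A 1 1 ^ 2 = 0
  · right
    rwa [he, C_0, zero_mul, zero_add]
  · left
    exact C_mul_add_mem_Pset he (pow_mem_Pset hP₁ 2)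
      ((bideg_le_of_mem_PsetIcc hR).trans_lt (by rw [Prod.lt_iff]; decide))


theorem condC_of_mem_Pset {φ' : MvPolynomial (Fin 6) k ≃ₐ[k] MvPolynomial (Fin 6) k}
    {α' : MvPolynomial (Fin 6) k →ₐ[k] MvPolynomial (Fin 6) k} {Y₀ Y₁ Y₂ T : MvPolynomial (Fin 6) k}
    (hY₀ : Y₀ ∈ Pset 3 4) (hY₁ : Y₁ ∈ Pset 2 3) (hY₂ : Y₂ ∈ Pset 1 2)
    (hT : T ∈ Pset 4 6 ∨ T ∈ PsetIcc (0, 1) (3, 5))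
    (hr : φ' (α' (X 3)) = Y₁ * T + Y₀ ^ 2) (hf : φ' (α' (X 4)) = T)
    (hg : φ' (α' (X 5)) = Y₂ * T ^ 2 + 2 * Y₀ * Y₁ * T + Y₀ ^ 3) :
    CondC 3 2 1 φ' α' := by
  have hb₀ := bideg_le_of_mem_Pset hY₀
  have hb₁ := bideg_le_of_mem_Pset hY₁
  have hb₂ := bideg_le_of_mem_Pset hY₂
  rcases hT with hT | hT
  · have hbT := bideg_le_of_mem_Pset hT
    have hQr : φ' (α' (X 3)) ∈ Pset 6 9 := by
      rw [hr]
      exact add_mem_Pset_of_bideg_lt (mul_mem_Pset hY₁ hT)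
        ((bideg_pow_le hb₀ 2).trans_lt (by rw [Prod.lt_iff]; decide))
    have hQg : φ' (α' (X 5)) ∈ Pset 9 14 := by
      rw [hg, add_assoc]
      exact add_mem_Pset_of_bideg_lt (mul_mem_Pset hY₂ (pow_mem_Pset hT 2))
        ((bideg_add_le (bideg_mul_le (bideg_mul_le (bideg_mul_le (bideg_ofNat_le 2) hb₀) hb₁) hbT)
          (bideg_pow_le hb₀ 3)).trans_lt (by rw [Prod.lt_iff]; decide))
    exact ⟨6, 4, 9, 9, 6, 14, by norm_num, by norm_num, by norm_num, hQr, hf ▸ hT, hQg,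
      by norm_num⟩
  · have hbT := bideg_le_of_mem_PsetIcc hT
    obtain ⟨⟨γ, δ⟩, ⟨⟨-, hδ⟩, -⟩, hT⟩ := hT
    have hQr : φ' (α' (X 3)) ∈ Pset 6 8 := by
      rw [hr, add_comm]
      exact add_mem_Pset_of_bideg_lt (pow_mem_Pset hY₀ 2)
        ((bideg_mul_le hb₁ hbT).trans_lt (by rw [Prod.lt_iff]; decide))
    have hQg : φ' (α' (X 5)) ∈ Pset 9 12 := by
      rw [hg, add_comm]
      exact add_mem_Pset_of_bideg_lt (pow_mem_Pset hY₀ 3)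
        ((bideg_add_le (bideg_mul_le hb₂ (bideg_pow_le hbT 2))
          (bideg_mul_le (bideg_mul_le (bideg_mul_le (bideg_ofNat_le 2) hb₀) hb₁) hbT)).trans_lt
          (by rw [Prod.lt_iff]; decide))
    exact ⟨6, γ, 9, 8, δ, 12, by norm_num, hδ, by norm_num, hQr, hf ▸ hT, hQg, by norm_num⟩

theorem statement17_general [CharZero k]
    (u : k) (hu : u ≠ 0)
    (φ' : MvPolynomial (Fin 6) k ≃ₐ[k] MvPolynomial (Fin 6) k)
    (hφ' : IsExpOf (fun p => u • Del' p) φ')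
    (A : Matrix (Fin 3) (Fin 3) k) (d : Fin 3 → k)
    (γ1 γ2 γ3 : ℕ)
    (ht1 : TypeIs A 0 γ1) (ht2 : TypeIs A 1 γ2) (ht3 : TypeIs A 2 γ3)
    (hcase : γ1 = 3 ∧ γ2 = 2 ∧ γ3 = 1) :
    CondC γ1 γ2 γ3 φ' (hatLift A d) := by
  obtain ⟨rfl, rfl, rfl⟩ := hcase
  have hP : ∀ i : Fin 3, φ' (X (ι36 i)) ∈ Pset (i + 1) (i + 2) := by
    intro i
    fin_cases i
    exacts [hφ'.apply_X_zero_mem_Pset hu, hφ'.apply_X_one_mem_Pset hu,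
      hφ'.apply_X_two_mem_Pset hu]
  refine condC_of_mem_Pset (map_affImg_mem_Pset hP (d := d) ht1)
    (map_affImg_mem_Pset hP (d := d) ht2) (map_affImg_mem_Pset hP (d := d) ht3)
    (map_hatTf_mem hφ'.apply_X_four hP d ht1 ht2 ht3) ?_ ?_ ?_ <;>
  simp only [hatLift, aeval_X, Matrix.cons_val, map_add, map_mul, map_pow, map_ofNat]

/-- (Lemma 5 of the paper.)  If the type of
`α ∈ Aff_3(k) \ B` is `(3,2,1)`, then the lift `α̂` satisfies condition (C). -/
theorem statement17 [CharZero k]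
    (hln6 : ∀ p : MvPolynomial (Fin 6) k, ∃ l : ℕ, Del'^[l] p = 0)
    (u : k) (hu : u ≠ 0)
    (φ' : MvPolynomial (Fin 6) k ≃ₐ[k] MvPolynomial (Fin 6) k)
    (hφ' : IsExpOf (fun p => u • Del' p) φ')
    (α : MvPolynomial (Fin 3) k ≃ₐ[k] MvPolynomial (Fin 3) k)
    (A : Matrix (Fin 3) (Fin 3) k) (d : Fin 3 → k)
    (hdet : IsUnit A.det)
    (hαA : ∀ i : Fin 3, α (X i) = (∑ j : Fin 3, C (A j i) * X j) + C (d i))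
    (hαB : α ∉ BSet)
    (γ1 γ2 γ3 : ℕ)
    (ht1 : TypeIs A 0 γ1) (ht2 : TypeIs A 1 γ2) (ht3 : TypeIs A 2 γ3)
    (hcase : γ1 = 3 ∧ γ2 = 2 ∧ γ3 = 1) :
    CondC γ1 γ2 γ3 φ' (hatLift A d) :=
  statement17_general u hu φ' hφ' A d γ1 γ2 γ3 ht1 ht2 ht3 hcase

end YasudaPaper
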